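/- Let Y be a set with a distinguished element x ∈ Y, let p be a prime, and let α be an integer with 0 < α < p. Let A be the subgroup of the free group F(Y) generated by the set (Y \ {x}) ∪ {x^{α}} (that is, by the generators other than x together with the α-th power of the generator x). Then for every g ∈ F(Y), if g^p ∈ A then g ∈ A. -/

import Mathlib

/-!
Write `A` as the image of the endomorphism `σ` of `F(Y)` with `x ↦ x ^ n` (`n = α`) fixing the
other generators. Map `F(Y)` to the wreath product `F(Y) ≀ ℤ/n`, sending each generator `y` to the
function with value `y` at `1` and `1` elsewhere, with shift `1` if `y = x` and no shift otherwise.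
On elements with trivial shift, evaluation at `1` is a homomorphism `ρ`, and `σ ∘ ρ` fixes the
generators of `A`, hence all of `A`. If `g ^ p ∈ A`, the shift of `g` is killed by `p`, which is
prime to `n`, so it is trivial; then `σ (ρ g) ^ p = σ (ρ (g ^ p)) = g ^ p`, and uniqueness of roots
in free groups gives `g = σ (ρ g) ∈ A`.
-/

namespace RegularWreathProduct

variable {D Q : Type*} [Group D] [Group Q]

theorem mul_left_of_right_eq_one {a : D ≀ᵣ Q} (ha : a.right = 1) (b : D ≀ᵣ Q) :
    (a * b).left = a.left * b.left := by
  simp [ha]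

theorem pow_right (a : D ≀ᵣ Q) (k : ℕ) : (a ^ k).right = a.right ^ k :=
  map_pow rightHom a k

theorem pow_left_of_right_eq_one {a : D ≀ᵣ Q} (ha : a.right = 1) (k : ℕ) :
    (a ^ k).left = a.left ^ k := by
  induction k with
  | zero => simp
  | succ k ih => rw [pow_succ', mul_left_of_right_eq_one ha, ih, pow_succ']

theorem pow_mk_mulSingle_left_one [DecidableEq Q] (d : D) (t : Q) {k : ℕ} (hk : 0 < k)
    (hkt : k ≤ orderOf t) : ((⟨Pi.mulSingle 1 d, t⟩ : D ≀ᵣ Q) ^ k).left 1 = d := by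
  induction k, hk using Nat.le_induction with
  | base => simp
  | succ k hk ih =>
    have htk : (t ^ k)⁻¹ ≠ 1 := inv_ne_one.mpr (pow_ne_one_of_lt_orderOf (by omega) hkt)
    rw [pow_succ, mul_left, pow_right, Pi.mul_apply, ih (by omega), mul_one]
    exact mul_eq_left.mpr (Pi.mulSingle_eq_of_ne htk _)

end RegularWreathProduct

namespace FreeGroup

open RegularWreathProduct

variable {Y : Type*} [DecidableEq Y] (n : ℕ) (x : Y)

def powGenerator : FreeGroup Y →* FreeGroup Y :=
  lift fun y ↦ if y = x then of x ^ n else of y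

theorem range_powGenerator :
    (powGenerator n x).range = Subgroup.closure ((of '' {y | y ≠ x}) ∪ {of x ^ n}) := by
  rw [powGenerator, range_lift_eq_closure]
  congr 1
  ext z
  constructor
  · rintro ⟨y, rfl⟩
    by_cases hy : y = x
    · simp [hy]
    · exact .inl ⟨y, hy, (if_neg hy).symm⟩
  · rintro (⟨y, hy, rfl⟩ | rfl)
    · exact ⟨y, if_neg hy⟩
    · exact ⟨x, if_pos rfl⟩

def toWreath : FreeGroup Y →* FreeGroup Y ≀ᵣ Multiplicative (ZMod n) :=
  lift fun y ↦ ⟨Pi.mulSingle 1 (of y), if y = x then .ofAdd 1 else 1⟩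

def retractSubgroup : Subgroup (FreeGroup Y) where
  carrier := {a | (toWreath n x a).right = 1 ∧ powGenerator n x ((toWreath n x a).left 1) = a}
  one_mem' := by simp
  mul_mem' := by
    rintro a b ⟨ha, ha'⟩ ⟨hb, hb'⟩
    refine ⟨by simp [ha, hb], ?_⟩
    rw [_root_.map_mul, mul_left_of_right_eq_one ha, Pi.mul_apply, _root_.map_mul, ha', hb']
  inv_mem' := by
    rintro a ⟨ha, ha'⟩
    refine ⟨by simp [ha], ?_⟩
    simp [ha, ha']

theorem toWreath_of_pow_right : (toWreath n x (of x ^ n)).right = 1 := by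
  simp [toWreath, pow_right, ← ofAdd_nsmul]

theorem toWreath_of_pow_left_one [NeZero n] : (toWreath n x (of x ^ n)).left 1 = of x := by
  rw [_root_.map_pow, toWreath, lift_apply_of, if_pos rfl]
  refine pow_mk_mulSingle_left_one _ _ (NeZero.pos n) ?_
  simp [orderOf_ofAdd_eq_addOrderOf]

theorem closure_le_retractSubgroup [NeZero n] :
    Subgroup.closure ((of '' {y | y ≠ x}) ∪ {of x ^ n}) ≤ retractSubgroup n x := by
  rw [Subgroup.closure_le]
  rintro z (⟨y, hy, rfl⟩ | rfl)
  · have hy : y ≠ x := hy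
    simp [retractSubgroup, toWreath, powGenerator, hy]
  · refine ⟨toWreath_of_pow_right n x, ?_⟩
    rw [toWreath_of_pow_left_one, powGenerator, lift_apply_of, if_pos rfl]

theorem mem_range_powGenerator_of_pow_mem [NeZero n] {p : ℕ} (hp : 0 < p) (hpn : p.Coprime n)
    {g : FreeGroup Y} (hg : g ^ p ∈ (powGenerator n x).range) : g ∈ (powGenerator n x).range := by
  obtain ⟨hright, hretract⟩ :=
    closure_le_retractSubgroup n x (range_powGenerator n x ▸ hg)
  have hg_right : (toWreath n x g).right = 1 := by
    have hcard : (Nat.card (Multiplicative (ZMod n))).Coprime p := by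
      simpa [Nat.card_eq_fintype_card] using hpn.symm
    refine hcard.pow_left_bijective.injective ?_
    simpa [pow_right] using hright
  rw [_root_.map_pow, pow_left_of_right_eq_one hg_right, Pi.pow_apply, _root_.map_pow] at hretract
  exact ⟨_, pow_left_injective hp.ne' hretract⟩

end FreeGroup

/-- Let `Y` be a set with `x ∈ Y`, `p` a prime and `α` an integer with `0 < α < p`.
If `A ≤ F(Y)` is the subgroup generated by the generators other than `x` together with
`x ^ α`, then `g ^ p ∈ A` implies `g ∈ A`. -/
theorem free_group_power_subgroup_root_mem {Y : Type*} (x : Y)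
    (p : ℕ) (hp : p.Prime) (α : ℤ) (hα : 0 < α) (hαp : α < (p : ℤ))
    (A : Subgroup (FreeGroup Y))
    (hA : A = Subgroup.closure
      ((FreeGroup.of '' {y : Y | y ≠ x}) ∪ {FreeGroup.of x ^ α}))
    (g : FreeGroup Y) (hg : g ^ p ∈ A) : g ∈ A := by
  classical
  obtain ⟨n, rfl⟩ := Int.eq_ofNat_of_zero_le hα.le
  have hn : 0 < n := by omega
  have : NeZero n := ⟨hn.ne'⟩
  have hpn : p.Coprime n := hp.coprime_iff_not_dvd.mpr (Nat.not_dvd_of_pos_of_lt hn (by omega))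
  rw [zpow_natCast, ← FreeGroup.range_powGenerator] at hA
  subst hA
  exact FreeGroup.mem_range_powGenerator_of_pow_mem n x hp.pos hpn hg
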